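/- Work in the quaternion algebra over the complex numbers, with complex imaginary unit I and quaternion units i, j, k, and let ω₁ = (−1 + I√3)/2 and ω₂ = (−1 − I√3)/2 be the two primitive cube roots of unity. Set α = 1 + 2i + 4j + 8k, β = 1 + ω₁·i + ω₁²·j + k, and γ = 1 + ω₂·i + ω₂²·j + k. Then for every integer n ≥ 0, JQ^{(3)}_n = (1/7)·[ 2^{n+1}·α − (1 + (2I√3)/3)·ω₁^n·β − (1 − (2I√3)/3)·ω₂^n·γ ], where complex scalars act on quaternions by scalar multiplication. -/

import Mathlib

open Quaternion Complex

/-- Third order Jacobsthal numbers. -/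
def J3 : ℕ → ℤ
  | 0 => 0
  | 1 => 1
  | 2 => 1
  | n + 3 => J3 (n + 2) + J3 (n + 1) + 2 * J3 n

/-- The quaternion unit `i` in the quaternion algebra over `ℂ`. -/
noncomputable def qi : ℍ[ℂ] := ⟨0, 1, 0, 0⟩
/-- The quaternion unit `j` in the quaternion algebra over `ℂ`. -/
noncomputable def qj : ℍ[ℂ] := ⟨0, 0, 1, 0⟩
/-- The quaternion unit `k` in the quaternion algebra over `ℂ`. -/
noncomputable def qk : ℍ[ℂ] := ⟨0, 0, 0, 1⟩

/-- The `n`-th third order Jacobsthal quaternion, viewed in the quaternion algebra over `ℂ`. -/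
noncomputable def JQ (n : ℕ) : ℍ[ℂ] :=
  (J3 n : ℂ) + (J3 (n + 1) : ℂ) * qi + (J3 (n + 2) : ℂ) * qj + (J3 (n + 3) : ℂ) * qk

/-- `ω₁ = (−1 + I√3)/2`, a primitive cube root of unity. -/
noncomputable def ω₁ : ℂ := (-1 + Complex.I * Real.sqrt 3) / 2
/-- `ω₂ = (−1 − I√3)/2`, the other primitive cube root of unity. -/
noncomputable def ω₂ : ℂ := (-1 - Complex.I * Real.sqrt 3) / 2

/-- `α = 1 + 2i + 4j + 8k`. -/
noncomputable def qα : ℍ[ℂ] := 1 + 2 * qi + 4 * qj + 8 * qk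
/-- `β = 1 + ω₁·i + ω₁²·j + k`. -/
noncomputable def qβ : ℍ[ℂ] := 1 + ω₁ • qi + (ω₁ ^ 2) • qj + qk
/-- `γ = 1 + ω₂·i + ω₂²·j + k`. -/
noncomputable def qγ : ℍ[ℂ] := 1 + ω₂ • qi + (ω₂ ^ 2) • qj + qk

/-!
The characteristic polynomial of the Jacobsthal recurrence is `X³ - X² - X - 2 = (X - 2)(X² + X + 1)`,
so `J3` is a linear combination of `2ⁿ`, `ω₁ⁿ` and `ω₂ⁿ`, with coefficients fixed by the three initial
values. Reading off four consecutive terms is linear, and for a geometric sequence `qⁿ` it gives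
`qⁿ (1 + q i + q² j + q³ k)`; since `ω³ = 1`, this is `ωⁿ β` (resp. `ωⁿ γ`), while `q = 2` gives `2ⁿ α`.
-/

theorem Quaternion.coe_ofNat {R : Type*} [CommRing R] (n : ℕ) [n.AtLeastTwo] :
    ((ofNat(n) : R) : ℍ[R]) = ofNat(n) := rfl

namespace ThirdOrderJacobsthal

variable {R : Type*} [CommRing R]

def recurrence (R : Type*) [CommRing R] : LinearRecurrence R := ⟨3, ![2, 1, 1]⟩

theorem isSolution_iff {u : ℕ → R} :
    (recurrence R).IsSolution u ↔ ∀ n, u (n + 3) = u (n + 2) + u (n + 1) + 2 * u n := by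
  refine forall_congr' fun n => ?_
  change u (n + 3) = ∑ i : Fin 3, ![(2 : R), 1, 1] i * u (n + i) ↔ _
  rw [Fin.sum_univ_three]
  simp only [Matrix.cons_val, Fin.val_zero, Fin.val_one, Fin.val_two]
  constructor <;> intro h <;> linear_combination h

theorem isSolution_J3 : (recurrence R).IsSolution fun n => (J3 n : R) :=
  isSolution_iff.2 fun n => by simp [J3]

theorem isSolution_pow {q : R} (hq : q ^ 3 = q ^ 2 + q + 2) : (recurrence R).IsSolution (q ^ ·) :=
  isSolution_iff.2 fun n => by linear_combination q ^ n * hq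

theorem pow_three_eq_of_sq_add_self_add_one {ω : R} (h : ω ^ 2 + ω + 1 = 0) : ω ^ 3 = 1 := by
  linear_combination (ω - 1) * h

theorem isSolution_pow_of_sq_add_self_add_one {ω : R} (h : ω ^ 2 + ω + 1 = 0) :
    (recurrence R).IsSolution (ω ^ ·) :=
  isSolution_pow (by linear_combination (ω - 2) * h)

theorem isSolution_two_pow : (recurrence R).IsSolution (2 ^ ·) :=
  isSolution_pow (by norm_num)

@[simps]
def quaternionOfSeq (n : ℕ) : (ℕ → R) →ₗ[R] ℍ[R] where
  toFun u := ⟨u n, u (n + 1), u (n + 2), u (n + 3)⟩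
  map_add' _ _ := rfl
  map_smul' _ _ := rfl

theorem quaternionOfSeq_smul_pow (n : ℕ) (c q : R) :
    quaternionOfSeq n (c • (q ^ ·)) = (c * q ^ n) • (⟨1, q, q ^ 2, q ^ 3⟩ : ℍ[R]) := by
  ext <;> simp [pow_add] <;> ring

theorem JQ_eq_quaternionOfSeq (n : ℕ) : JQ n = quaternionOfSeq n fun m => (J3 m : ℂ) := by
  ext <;> simp [JQ] <;> simp [qi, qj, qk]

theorem one_add_smul_qi_add_smul_qj_add_qk (a b : ℂ) : 1 + a • qi + b • qj + qk = ⟨1, a, b, 1⟩ := by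
  ext <;> simp <;> simp [qi, qj, qk]

theorem qα_eq : qα = ⟨1, 2, 2 ^ 2, 2 ^ 3⟩ := by
  ext <;> simp [qα, ← Quaternion.coe_ofNat] <;> simp [qi, qj, qk] <;> norm_num

theorem I_mul_sqrt_three_sq : (I * √3) ^ 2 = -3 := by
  rw [mul_pow, I_sq, ← ofReal_pow, Real.sq_sqrt (by norm_num)]
  norm_num

theorem ω₁_sq_add_self_add_one : ω₁ ^ 2 + ω₁ + 1 = 0 := by
  unfold ω₁
  linear_combination (1 / 4 : ℂ) * I_mul_sqrt_three_sq

theorem ω₂_sq_add_self_add_one : ω₂ ^ 2 + ω₂ + 1 = 0 := by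
  unfold ω₂
  linear_combination (1 / 4 : ℂ) * I_mul_sqrt_three_sq

theorem qβ_eq : qβ = ⟨1, ω₁, ω₁ ^ 2, ω₁ ^ 3⟩ := by
  rw [pow_three_eq_of_sq_add_self_add_one ω₁_sq_add_self_add_one, qβ,
    one_add_smul_qi_add_smul_qj_add_qk]

theorem qγ_eq : qγ = ⟨1, ω₂, ω₂ ^ 2, ω₂ ^ 3⟩ := by
  rw [pow_three_eq_of_sq_add_self_add_one ω₂_sq_add_self_add_one, qγ,
    one_add_smul_qi_add_smul_qj_add_qk]

theorem J3_eq_binet : (fun m => (J3 m : ℂ)) = (1 / 7 : ℂ) • ((2 : ℂ) • (2 ^ ·)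
    - (1 + 2 * I * Real.sqrt 3 / 3) • (ω₁ ^ ·) - (1 - 2 * I * Real.sqrt 3 / 3) • (ω₂ ^ ·)) := by
  have hsol : (recurrence ℂ).IsSolution ((1 / 7 : ℂ) • ((2 : ℂ) • (2 ^ ·)
      - (1 + 2 * I * Real.sqrt 3 / 3) • (ω₁ ^ ·) - (1 - 2 * I * Real.sqrt 3 / 3) • (ω₂ ^ ·))) := by
    have h₁ := isSolution_pow_of_sq_add_self_add_one ω₁_sq_add_self_add_one
    have h₂ := isSolution_pow_of_sq_add_self_add_one ω₂_sq_add_self_add_one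
    have h₀ := isSolution_two_pow (R := ℂ)
    rw [LinearRecurrence.is_sol_iff_mem_solSpace] at *
    exact Submodule.smul_mem _ _ <| sub_mem (sub_mem (Submodule.smul_mem _ _ h₀)
      (Submodule.smul_mem _ _ h₁)) (Submodule.smul_mem _ _ h₂)
  refine ((recurrence ℂ).eq_iff_eqOn_range_order _ _ isSolution_J3 hsol).2 fun m hm => ?_
  simp only [recurrence, Finset.coe_range, Set.mem_Iio] at hm
  interval_cases m <;>
    simp only [J3, Int.cast_zero, Int.cast_one, Pi.smul_apply, Pi.sub_apply, smul_eq_mul, ω₁, ω₂]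
  · ring
  · linear_combination (2 / 21 : ℂ) * I_mul_sqrt_three_sq
  · linear_combination (-1 / 42 : ℂ) * I_mul_sqrt_three_sq

end ThirdOrderJacobsthal

theorem third_order_jacobsthal_quaternion_binet (n : ℕ) :
    JQ n = (1 / 7 : ℂ) •
      ((2 ^ (n + 1) : ℂ) • qα
        - ((1 + 2 * Complex.I * Real.sqrt 3 / 3) * ω₁ ^ n) • qβ
        - ((1 - 2 * Complex.I * Real.sqrt 3 / 3) * ω₂ ^ n) • qγ) := by
  open ThirdOrderJacobsthal in
  rw [JQ_eq_quaternionOfSeq, J3_eq_binet, map_smul, map_sub, map_sub, quaternionOfSeq_smul_pow,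
    quaternionOfSeq_smul_pow, quaternionOfSeq_smul_pow, qα_eq, qβ_eq, qγ_eq, ← pow_succ']
  -- `map_smul` reaches the `ℂ`-action on `ℍ[ℂ]` through a different instance path
  rfl
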